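/- arXiv:1908.09252 — 2 statements merged into one kernel-verified Lean document; each statement's English description precedes it below -/
import Mathlib

section
/- Let h ≥ 0, let u : E^N → ℝ be continuous with u ≺ L + h, and let γ : [a,b] → E^N be an h-calibrating curve of u such that the endpoint x₀ = γ(b) is a configuration with collisions (x₀ ∉ Ω). Then there is no Lipschitz function ψ defined on a neighbourhood of x₀ such that ψ ≤ u on that neighbourhood and ψ(x₀) = u(x₀). -/
/-!
Suppose such a Lipschitz `ψ` exists. Let `ℓ(t)` be the length of the calibrating curve on
`[t, b]`. Near the collision at time `b` some pair of bodies stays within `2ℓ(t)` of each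
other on `[t, b]`, so the potential is at least of order `1/ℓ(t)` there, and by AM-GM the
action on `[t, b]` is at least of order `√ℓ(t)`. Since subarcs of a calibrating curve are
calibrating, that action equals `u(x₀) - u(γ(t)) ≤ ψ(x₀) - ψ(γ(t)) = O(ℓ(t))`, which is
impossible as `ℓ(t) → 0`. The degenerate case `ℓ(t) = 0` means the curve rests at the
collision on `[t, b]`, where the action is infinite.
-/

open MeasureTheory Filter Topology Set
open scoped ENNReal

noncomputable section

namespace NBodyHJ

variable {N : ℕ} {E : Type*} [NormedAddCommGroup E] [InnerProductSpace ℝ E]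

/-- Squared mass norm on the configuration space `Fin N → E`. -/
def msq (m : Fin N → ℝ) (v : Fin N → E) : ℝ := ∑ i, m i * ‖v i‖ ^ 2

/-- Mass norm on the configuration space. -/
def mnorm (m : Fin N → ℝ) (v : Fin N → E) : ℝ := Real.sqrt (msq m v)

/-- The set of collision-free configurations. -/
def Omega : Set (Fin N → E) := {x | ∀ i j : Fin N, i ≠ j → x i ≠ x j}

/-- The set of (ordered) pairs `i < j`. -/
def pairs (N : ℕ) : Finset (Fin N × Fin N) := Finset.univ.filter fun p => p.1 < p.2

/-- The Newtonian potential, real-valued (junk value `0` for the colliding pairs). -/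
def U (m : Fin N → ℝ) (x : Fin N → E) : ℝ :=
  ∑ p ∈ pairs N, m p.1 * m p.2 / dist (x p.1) (x p.2)

/-- The Newtonian potential with value `∞` at collisions. -/
def Upot (m : Fin N → ℝ) (x : Fin N → E) : ℝ≥0∞ :=
  ∑ p ∈ pairs N, ENNReal.ofReal (m p.1 * m p.2) / edist (x p.1) (x p.2)

/-- The Newtonian force acting on body `i`. -/
def force (m : Fin N → ℝ) (x : Fin N → E) (i : Fin N) : E :=
  ∑ j ∈ Finset.univ.erase i, ((m i * m j) / ‖x j - x i‖ ^ 3) • (x j - x i)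

/-- `x`, with velocity `v`, is a collision-free solution of Newton's equations on `s`. -/
def IsMotion (m : Fin N → ℝ) (s : Set ℝ) (x v : ℝ → Fin N → E) : Prop :=
  ∀ t ∈ s, x t ∈ Omega ∧
    (∀ i, HasDerivAt (fun τ => x τ i) (v t i) t) ∧
    (∀ i, HasDerivAt (fun τ => v τ i) ((m i)⁻¹ • force m (x t) i) t)

/-- `f` is absolutely continuous on `[a,b]` with derivative `g`. -/
def IsACOn (f g : ℝ → Fin N → E) (a b : ℝ) : Prop :=
  IntegrableOn g (Set.Icc a b) volume ∧
    ∀ t ∈ Set.Icc a b, f t = f a + ∫ s in a..t, g s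

/-- The Lagrangian action of the curve `f` (with derivative `g`) on `[a,b]`. -/
def actionOn (m : Fin N → ℝ) (f g : ℝ → Fin N → E) (a b : ℝ) : ℝ≥0∞ :=
  ∫⁻ t in Set.Icc a b, (ENNReal.ofReal (2⁻¹ * msq m (g t)) + Upot m (f t))

/-- The action `A_{L+h}`. -/
def actionOnH (m : Fin N → ℝ) (h : ℝ) (f g : ℝ → Fin N → E) (a b : ℝ) : ℝ≥0∞ :=
  actionOn m f g a b + ENNReal.ofReal (h * (b - a))

/-- The fixed-time action potential `φ(x,y,τ)`. -/
def phi (m : Fin N → ℝ) (x y : Fin N → E) (τ : ℝ) : ℝ≥0∞ :=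
  ⨅ (f : ℝ → Fin N → E) (g : ℝ → Fin N → E) (a : ℝ)
    (_ : IsACOn f g a (a + τ) ∧ f a = x ∧ f (a + τ) = y),
    actionOn m f g a (a + τ)

/-- The supercritical action potential `φ_h(x,y)`. -/
def phiH (m : Fin N → ℝ) (h : ℝ) (x y : Fin N → E) : ℝ≥0∞ :=
  ⨅ (τ : ℝ) (_ : 0 < τ), phi m x y τ + ENNReal.ofReal (h * τ)

/-- `u ≺ L + h` : domination of `u` by the action potential. -/
def Dominated (m : Fin N → ℝ) (h : ℝ) (u : (Fin N → E) → ℝ) : Prop :=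
  ∀ x y : Fin N → E, ENNReal.ofReal (u y - u x) ≤ phiH m h x y

/-- `H(x,p) ≤ h`, expressed through the Fenchel inequality. -/
def HamLe (m : Fin N → ℝ) (x : Fin N → E) (p : (Fin N → E) →L[ℝ] ℝ) (h : ℝ) : Prop :=
  ∀ v : Fin N → E, p v - (2⁻¹ * msq m v + U m x) ≤ h

/-- `H(x,p) ≥ h`, expressed through the Fenchel (in)equality `H(x,p) = sup_v (p v - L(x,v))`. -/
def HamGe (m : Fin N → ℝ) (x : Fin N → E) (p : (Fin N → E) →L[ℝ] ℝ) (h : ℝ) : Prop :=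
  ∀ ε : ℝ, 0 < ε → ∃ v : Fin N → E, h - ε ≤ p v - (2⁻¹ * msq m v + U m x)

/-- Viscosity subsolutions of `H(x,d_xu) = h`. -/
def IsViscSubsol (m : Fin N → ℝ) (h : ℝ) (u : (Fin N → E) → ℝ) : Prop :=
  ∀ ψ : (Fin N → E) → ℝ, ContDiff ℝ 1 ψ →
    ∀ x₀ : Fin N → E, IsLocalMax (fun x => u x - ψ x) x₀ → HamLe m x₀ (fderiv ℝ ψ x₀) h

/-- Viscosity supersolutions of `H(x,d_xu) = h`. -/
def IsViscSupersol (m : Fin N → ℝ) (h : ℝ) (u : (Fin N → E) → ℝ) : Prop :=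
  ∀ ψ : (Fin N → E) → ℝ, ContDiff ℝ 1 ψ →
    ∀ x₀ : Fin N → E, IsLocalMin (fun x => u x - ψ x) x₀ → HamGe m x₀ (fderiv ℝ ψ x₀) h

/-- The Lax–Oleinik semigroup `T_t`. -/
def LOt (m : Fin N → ℝ) (t : ℝ) (u : (Fin N → E) → ℝ) (x : Fin N → E) : ℝ :=
  if t ≤ 0 then u x else ⨅ y : Fin N → E, (u y + (phi m y x t).toReal)

/-- Horofunctions: elements of the ideal boundary `B_h`. -/
def IsHoro (m : Fin N → ℝ) (h : ℝ) (u : (Fin N → E) → ℝ) : Prop :=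
  Continuous u ∧ ∃ p : ℕ → Fin N → E,
    Tendsto (fun n => mnorm m (p n)) atTop atTop ∧
    ∀ x, Tendsto
      (fun n => (phiH m h x (p n)).toReal - (phiH m h (0 : Fin N → E) (p n)).toReal)
      atTop (nhds (u x))

/-- Horofunctions directed by the configuration `a`: elements of `B_h(a)`. -/
def IsHoroDir (m : Fin N → ℝ) (h : ℝ) (a : Fin N → E) (u : (Fin N → E) → ℝ) : Prop :=
  Continuous u ∧ ∃ (p : ℕ → Fin N → E) (lam : ℕ → ℝ),
    Tendsto lam atTop atTop ∧
    Tendsto (fun n => (lam n)⁻¹ • p n) atTop (nhds a) ∧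
    ∀ x, Tendsto
      (fun n => (phiH m h x (p n)).toReal - (phiH m h (0 : Fin N → E) (p n)).toReal)
      atTop (nhds (u x))

/-- Piecewise `C¹` curves on `[a,b]`. -/
def PiecewiseC1On (γ : ℝ → Fin N → E) (a b : ℝ) : Prop :=
  ContinuousOn γ (Set.Icc a b) ∧
    ∃ (n : ℕ) (t : Fin (n + 1) → ℝ), Monotone t ∧ t 0 = a ∧ t (Fin.last n) = b ∧
      ∀ i : Fin n, ContDiffOn ℝ 1 γ (Set.Icc (t i.castSucc) (t i.succ))

/-- The Jacobi–Maupertuis length of a curve. -/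
def jmLength (m : Fin N → ℝ) (h : ℝ) (γ : ℝ → Fin N → E) (a b : ℝ) : ℝ :=
  ∫ t in a..b, Real.sqrt (2 * (h + U m (γ t))) * mnorm m (deriv γ t)

/-- The Riemannian distance `d_h` of the Jacobi–Maupertuis metric on `Ω`. -/
def jmDist (m : Fin N → ℝ) (h : ℝ) (x y : Fin N → E) : ℝ :=
  sInf {r : ℝ | ∃ (γ : ℝ → Fin N → E) (a b : ℝ), a ≤ b ∧ PiecewiseC1On γ a b ∧
    (∀ t ∈ Set.Icc a b, γ t ∈ Omega) ∧ γ a = x ∧ γ b = y ∧ r = jmLength m h γ a b}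

end NBodyHJ

theorem tendsto_intervalIntegral_nhdsLT {F : Type*} [NormedAddCommGroup F] [NormedSpace ℝ F]
    {φ : ℝ → F} {a b : ℝ} (hφ : IntegrableOn φ (Icc a b)) (hab : a < b) :
    Tendsto (fun t => ∫ σ in t..b, φ σ) (𝓝[<] b) (𝓝 0) := by
  have hcont := intervalIntegral.continuousOn_primitive_interval_left (μ := volume)
    (by rwa [uIcc_of_le hab.le])
  have hb := (hcont b right_mem_uIcc).mono (Ioo_subset_Icc_self.trans_eq (uIcc_of_le hab.le).symm)
  rwa [ContinuousWithinAt, nhdsWithin_Ioo_eq_nhdsLT hab, intervalIntegral.integral_same] at hb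

theorem LipschitzOnWith.sub_le_mul_dist_of_le_of_eq {X : Type*} [PseudoMetricSpace X]
    {ψ u : X → ℝ} {s : Set X} {K : NNReal} {x y : X} (hψ : LipschitzOnWith K ψ s)
    (hψu : ∀ z ∈ s, ψ z ≤ u z) (hx : x ∈ s) (hψx : ψ x = u x) (hy : y ∈ s) :
    u x - u y ≤ K * dist y x :=
  calc u x - u y ≤ ψ x - ψ y := by linarith [hψu y hy]
    _ ≤ K * dist x y := (le_abs_self _).trans (hψ.dist_le_mul x hx y hy)
    _ = K * dist y x := by rw [dist_comm]

namespace NBodyHJ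

variable {N : ℕ} {E : Type*}

theorem exists_lt_apply_eq_of_notMem_Omega {x : Fin N → E} (hx : x ∉ Omega) :
    ∃ i j, i < j ∧ x i = x j := by
  simp only [Omega, mem_ofPred_eq, not_forall, not_not] at hx
  obtain ⟨i, j, hne, heq⟩ := hx
  rcases hne.lt_or_gt with hlt | hlt
  · exact ⟨i, j, hlt, heq⟩
  · exact ⟨j, i, hlt, heq.symm⟩

theorem sqrt_two_mul_mul_le {μ c r : ℝ} (hμ : 0 ≤ μ) (hc : 0 ≤ c) :
    √(2 * μ * c) * r ≤ 2⁻¹ * (μ * r ^ 2) + c := by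
  have hsplit : √(2 * μ * c) = √μ * √(2 * c) := by
    rw [← Real.sqrt_mul hμ]; ring_nf
  rw [hsplit]
  nlinarith [sq_nonneg (√μ * r - √(2 * c)), Real.sq_sqrt hμ,
    Real.sq_sqrt (by positivity : 0 ≤ 2 * c)]

section Potential

variable [NormedAddCommGroup E] {m : Fin N → ℝ}

theorem dist_apply_le_two_mul_dist {x y : Fin N → E} {i j : Fin N} (hy : y i = y j) :
    dist (x i) (x j) ≤ 2 * dist x y := by
  calc dist (x i) (x j) ≤ dist (x i) (y i) + dist (y j) (x j) := by
        rw [hy]; exact dist_triangle _ _ _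
    _ ≤ dist x y + dist y x := add_le_add (dist_le_pi_dist x y i) (dist_le_pi_dist y x j)
    _ = 2 * dist x y := by rw [dist_comm y x]; ring

theorem div_edist_le_Upot (m : Fin N → ℝ) {i j : Fin N} (hij : i < j) (x : Fin N → E) :
    ENNReal.ofReal (m i * m j) / edist (x i) (x j) ≤ Upot m x :=
  Finset.single_le_sum (s := pairs N) (a := (i, j))
    (f := fun p : Fin N × Fin N => ENNReal.ofReal (m p.1 * m p.2) / edist (x p.1) (x p.2))
    (fun _ _ => zero_le) (Finset.mem_filter.2 ⟨Finset.mem_univ _, hij⟩)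

theorem Upot_eq_top (hm : ∀ k, 0 < m k) {x : Fin N → E} (hx : x ∉ Omega) : Upot m x = ⊤ := by
  obtain ⟨i, j, hij, heq⟩ := exists_lt_apply_eq_of_notMem_Omega hx
  refine top_le_iff.1 (le_trans (le_of_eq ?_) (div_edist_le_Upot m hij x))
  rw [heq, edist_self, ENNReal.div_zero]
  exact (ENNReal.ofReal_pos.2 (mul_pos (hm i) (hm j))).ne'

theorem mul_sq_norm_le_msq {μ : ℝ} (hμ : 0 ≤ μ) (hμm : ∀ k, μ ≤ m k) (v : Fin N → E) :
    μ * ‖v‖ ^ 2 ≤ msq m v := by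
  have hnorm : ‖v‖ ≤ √(∑ k, ‖v k‖ ^ 2) :=
    (pi_norm_le_iff_of_nonneg (Real.sqrt_nonneg _)).2 fun k => Real.le_sqrt_of_sq_le
      (Finset.single_le_sum (fun l _ => sq_nonneg ‖v l‖) (Finset.mem_univ k))
  have hsq : ‖v‖ ^ 2 ≤ ∑ k, ‖v k‖ ^ 2 := by
    calc ‖v‖ ^ 2 ≤ √(∑ k, ‖v k‖ ^ 2) ^ 2 := pow_le_pow_left₀ (norm_nonneg v) hnorm 2
      _ = ∑ k, ‖v k‖ ^ 2 := Real.sq_sqrt (Finset.sum_nonneg fun k _ => sq_nonneg ‖v k‖)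
  calc μ * ‖v‖ ^ 2 ≤ ∑ k, μ * ‖v k‖ ^ 2 := by
        rw [← Finset.mul_sum]; exact mul_le_mul_of_nonneg_left hsq hμ
    _ ≤ msq m v := Finset.sum_le_sum fun k _ => mul_le_mul_of_nonneg_right (hμm k) (sq_nonneg _)

end Potential

section Action

variable [NormedAddCommGroup E] {m : Fin N → ℝ} {h : ℝ} {f g : ℝ → Fin N → E} {a b t : ℝ}

theorem actionOn_add (hat : a ≤ t) (htb : t ≤ b) :
    actionOn m f g a t + actionOn m f g t b = actionOn m f g a b := by
  have hdisj : Disjoint (Icc a t) (Ioc t b) :=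
    disjoint_left.2 fun _ hx hx' => (not_le.2 hx'.1) hx.2
  rw [actionOn, actionOn, actionOn, ← Icc_union_Ioc_eq_Icc hat htb,
    lintegral_union measurableSet_Ioc hdisj, setLIntegral_congr Ioc_ae_eq_Icc]

theorem toReal_actionOnH (hh : 0 ≤ h) (hab : a ≤ b) (hfin : actionOn m f g a b ≠ ⊤) :
    (actionOnH m h f g a b).toReal = (actionOn m f g a b).toReal + h * (b - a) := by
  rw [actionOnH, ENNReal.toReal_add hfin ENNReal.ofReal_ne_top,
    ENNReal.toReal_ofReal (mul_nonneg hh (sub_nonneg.2 hab))]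

theorem actionOn_eq_top (htb : t < b) (hU : ∀ τ ∈ Icc t b, Upot m (f τ) = ⊤) :
    actionOn m f g t b = ⊤ := by
  refine top_le_iff.1 (le_trans (le_of_eq ?_) (setLIntegral_mono' measurableSet_Icc
    fun τ hτ => (le_of_eq (by rw [hU τ hτ, add_top]) : ⊤ ≤ _)))
  rw [setLIntegral_const, Real.volume_Icc,
    ENNReal.top_mul (ENNReal.ofReal_pos.2 (sub_pos.2 htb)).ne']

theorem ofReal_mul_integral_norm_le_actionOn {μ c : ℝ} (hμ : 0 ≤ μ) (hμm : ∀ k, μ ≤ m k)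
    (hc : 0 ≤ c) (htb : t ≤ b) (hg : IntegrableOn g (Icc t b))
    (hU : ∀ τ ∈ Icc t b, ENNReal.ofReal c ≤ Upot m (f τ)) :
    ENNReal.ofReal (√(2 * μ * c) * ∫ σ in t..b, ‖g σ‖) ≤ actionOn m f g t b := by
  rw [← intervalIntegral.integral_const_mul, intervalIntegral.integral_of_le htb,
    ← integral_Icc_eq_integral_Ioc, ofReal_integral_eq_lintegral_ofReal (hg.norm.const_mul _)
      (ae_of_all _ fun σ => by positivity)]
  refine setLIntegral_mono' measurableSet_Icc fun τ hτ => ?_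
  have hmsq := mul_sq_norm_le_msq hμ hμm (g τ)
  calc ENNReal.ofReal (√(2 * μ * c) * ‖g τ‖)
      ≤ ENNReal.ofReal (2⁻¹ * msq m (g τ) + c) := by
        refine ENNReal.ofReal_le_ofReal ((sqrt_two_mul_mul_le hμ hc).trans ?_)
        gcongr
    _ = ENNReal.ofReal (2⁻¹ * msq m (g τ)) + ENNReal.ofReal c :=
        ENNReal.ofReal_add (by nlinarith [sq_nonneg ‖g τ‖]) hc
    _ ≤ ENNReal.ofReal (2⁻¹ * msq m (g τ)) + Upot m (f τ) := by gcongr; exact hU τ hτ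

end Action

section Curves

variable [NormedAddCommGroup E] [InnerProductSpace ℝ E] {m : Fin N → ℝ}
  {f g : ℝ → Fin N → E} {a b t τ : ℝ}

theorem IsACOn.intervalIntegrable (hac : IsACOn f g a b) (hat : a ≤ t) (htτ : t ≤ τ)
    (hτb : τ ≤ b) : IntervalIntegrable g volume t τ :=
  IntegrableOn.intervalIntegrable <| by
    rw [uIcc_of_le htτ]; exact hac.1.mono_set (Icc_subset_Icc hat hτb)

theorem IsACOn.mono_right (hac : IsACOn f g a b) (htb : t ≤ b) : IsACOn f g a t :=
  ⟨hac.1.mono_set (Icc_subset_Icc le_rfl htb), fun s hs => hac.2 s ⟨hs.1, hs.2.trans htb⟩⟩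

theorem IsACOn.dist_le_integral_norm (hac : IsACOn f g a b) (hat : a ≤ t) (htτ : t ≤ τ)
    (hτb : τ ≤ b) : dist (f τ) (f b) ≤ ∫ σ in t..b, ‖g σ‖ := by
  have hinc : f b - f τ = ∫ σ in τ..b, g σ := by
    rw [hac.2 b ⟨hat.trans (htτ.trans hτb), le_rfl⟩, hac.2 τ ⟨hat.trans htτ, hτb⟩,
      ← intervalIntegral.integral_interval_sub_left
        (hac.intervalIntegrable le_rfl (hat.trans (htτ.trans hτb)) le_rfl)
        (hac.intervalIntegrable le_rfl (hat.trans htτ) hτb)]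
    abel
  calc dist (f τ) (f b) = ‖∫ σ in τ..b, g σ‖ := by rw [dist_comm, dist_eq_norm, hinc]
    _ ≤ ∫ σ in τ..b, ‖g σ‖ := intervalIntegral.norm_integral_le_integral_norm hτb
    _ ≤ ∫ σ in t..b, ‖g σ‖ :=
        intervalIntegral.integral_mono_interval htτ hτb le_rfl
          (ae_of_all _ fun σ => norm_nonneg (g σ))
          (hac.intervalIntegrable hat (htτ.trans hτb) le_rfl).norm

theorem IsACOn.actionOn_eq_top_of_integral_norm_eq_zero (hm : ∀ k, 0 < m k)
    (hac : IsACOn f g a b) (hcol : f b ∉ Omega) (hat : a ≤ t) (htb : t < b)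
    (hℓ : ∫ σ in t..b, ‖g σ‖ = 0) : actionOn m f g t b = ⊤ :=
  actionOn_eq_top htb fun τ hτ => Upot_eq_top hm <| by
    have hdist := hac.dist_le_integral_norm hat hτ.1 hτ.2
    rw [hℓ, dist_le_zero] at hdist
    rwa [hdist]

/-- On `[t, b]` the colliding bodies `i` and `j` stay within `2ℓ` of each other, `ℓ` being the
length of the curve on `[t, b]`, so the potential there is at least `m i m j / (2ℓ)`. -/
theorem IsACOn.ofReal_mul_sqrt_le_actionOn {μ : ℝ} (hμ : 0 ≤ μ) (hμm : ∀ k, μ ≤ m k)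
    (hac : IsACOn f g a b) {i j : Fin N} (hij : i < j) (hcij : f b i = f b j) (hat : a ≤ t)
    (htb : t ≤ b) (hℓ : 0 < ∫ σ in t..b, ‖g σ‖) :
    ENNReal.ofReal (√(μ * (m i * m j)) * √(∫ σ in t..b, ‖g σ‖)) ≤ actionOn m f g t b := by
  set ℓ := ∫ σ in t..b, ‖g σ‖
  have hmij : 0 ≤ m i * m j := mul_nonneg (hμ.trans (hμm i)) (hμ.trans (hμm j))
  have hU : ∀ τ ∈ Icc t b, ENNReal.ofReal (m i * m j / (2 * ℓ)) ≤ Upot m (f τ) := by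
    intro τ hτ
    have hd : dist (f τ i) (f τ j) ≤ 2 * ℓ :=
      (dist_apply_le_two_mul_dist hcij).trans
        (by linarith [hac.dist_le_integral_norm hat hτ.1 hτ.2])
    calc ENNReal.ofReal (m i * m j / (2 * ℓ))
        = ENNReal.ofReal (m i * m j) / ENNReal.ofReal (2 * ℓ) :=
          ENNReal.ofReal_div_of_pos (by positivity)
      _ ≤ ENNReal.ofReal (m i * m j) / edist (f τ i) (f τ j) := by
          rw [edist_dist]; exact ENNReal.div_le_div_left (ENNReal.ofReal_le_ofReal hd) _
      _ ≤ Upot m (f τ) := div_edist_le_Upot m hij (f τ)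
  convert ofReal_mul_integral_norm_le_actionOn hμ hμm (by positivity) htb
    (hac.1.mono_set (Icc_subset_Icc hat le_rfl)) hU using 2
  rw [show 2 * μ * (m i * m j / (2 * ℓ)) = μ * (m i * m j) / ℓ by field_simp,
    Real.sqrt_div' _ hℓ.le, div_mul_eq_mul_div, mul_div_assoc, Real.div_sqrt]

theorem phiH_le_actionOnH (h : ℝ) (hac : IsACOn f g a b) (hab : a < b) :
    phiH m h (f a) (f b) ≤ actionOnH m h f g a b := by
  refine iInf_le_of_le (b - a) (iInf_le_of_le (sub_pos.2 hab) (add_le_add_left ?_ _))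
  refine iInf_le_of_le f (iInf_le_of_le g (iInf_le_of_le a ?_))
  rw [add_sub_cancel]
  exact iInf_le _ ⟨hac, rfl, rfl⟩

end Curves

section Calibration

variable [NormedAddCommGroup E] [InnerProductSpace ℝ E] {m : Fin N → ℝ} {h : ℝ}
  {u : (Fin N → E) → ℝ} {f g : ℝ → Fin N → E} {a b t : ℝ}

def IsCalibrating (m : Fin N → ℝ) (h : ℝ) (u : (Fin N → E) → ℝ) (f g : ℝ → Fin N → E)
    (a b : ℝ) : Prop :=
  actionOnH m h f g a b ≠ ⊤ ∧ (actionOnH m h f g a b).toReal = u (f b) - u (f a)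

theorem Dominated.sub_le_toReal_actionOnH (hdom : Dominated m h u) (hac : IsACOn f g a b)
    (hab : a < b) (hfin : actionOnH m h f g a b ≠ ⊤) :
    u (f b) - u (f a) ≤ (actionOnH m h f g a b).toReal :=
  (ENNReal.ofReal_le_iff_le_toReal hfin).1 ((hdom _ _).trans (phiH_le_actionOnH h hac hab))

theorem Dominated.actionOn_le_of_isCalibrating (hh : 0 ≤ h) (hdom : Dominated m h u)
    (hac : IsACOn f g a b) (hcal : IsCalibrating m h u f g a b) (ht : t ∈ Ioo a b) :
    actionOn m f g t b ≤ ENNReal.ofReal (u (f b) - u (f t)) := by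
  have hsplit := actionOn_add (m := m) (f := f) (g := g) ht.1.le ht.2.le
  have hfin : actionOn m f g a b ≠ ⊤ := fun htop => hcal.1 (by simp [actionOnH, htop])
  obtain ⟨hhead, htail⟩ := ENNReal.add_ne_top.1 (hsplit ▸ hfin)
  have hu_head := hdom.sub_le_toReal_actionOnH (hac.mono_right ht.2.le) ht.1
    (ENNReal.add_ne_top.2 ⟨hhead, ENNReal.ofReal_ne_top⟩)
  have hu_whole := hcal.2
  rw [toReal_actionOnH hh ht.1.le hhead] at hu_head
  rw [toReal_actionOnH hh (ht.1.trans ht.2).le hfin, ← hsplit,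
    ENNReal.toReal_add hhead htail] at hu_whole
  rw [← ENNReal.ofReal_toReal htail]
  exact ENNReal.ofReal_le_ofReal (by nlinarith [mul_nonneg hh (sub_nonneg.2 ht.2.le)])

theorem Dominated.integral_norm_pos_of_isCalibrating (hm : ∀ k, 0 < m k) (hh : 0 ≤ h)
    (hdom : Dominated m h u) (hac : IsACOn f g a b) (hcal : IsCalibrating m h u f g a b)
    (hcol : f b ∉ Omega) (ht : t ∈ Ioo a b) : 0 < ∫ σ in t..b, ‖g σ‖ := by
  refine (intervalIntegral.integral_nonneg ht.2.le fun σ _ => norm_nonneg (g σ)).lt_of_ne' ?_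
  intro h0
  have hA := hdom.actionOn_le_of_isCalibrating hh hac hcal ht
  rw [hac.actionOn_eq_top_of_integral_norm_eq_zero hm hcol ht.1.le ht.2 h0] at hA
  exact ENNReal.ofReal_ne_top (top_le_iff.1 hA)

end Calibration

theorem stmt10_general
    {E : Type*} [NormedAddCommGroup E] [InnerProductSpace ℝ E]
    {N : ℕ} (m : Fin N → ℝ) (hm : ∀ i, 0 < m i)
    (h : ℝ) (hh : 0 ≤ h) (u : (Fin N → E) → ℝ)
    (hdom : Dominated m h u)
    (f g : ℝ → Fin N → E) (a b : ℝ) (hab : a < b)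
    (hac : IsACOn f g a b)
    (hcal : actionOnH m h f g a b ≠ ⊤ ∧ (actionOnH m h f g a b).toReal = u (f b) - u (f a))
    (hcol : f b ∉ Omega) :
    ¬ ∃ (ψ : (Fin N → E) → ℝ) (s : Set (Fin N → E)) (K : NNReal),
        s ∈ nhds (f b) ∧ LipschitzOnWith K ψ s ∧ (∀ z ∈ s, ψ z ≤ u z) ∧ ψ (f b) = u (f b) := by
  rintro ⟨ψ, s, K, hs, hψ, hψu, hψb⟩
  obtain ⟨i, j, hij, hcij⟩ := exists_lt_apply_eq_of_notMem_Omega hcol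
  have : Nonempty (Fin N) := ⟨i⟩
  obtain ⟨k₀, hk₀⟩ := Finite.exists_min m
  set c := √(m k₀ * (m i * m j))
  have hc : 0 < c := Real.sqrt_pos.2 (mul_pos (hm k₀) (mul_pos (hm i) (hm j)))
  set ℓ : ℝ → ℝ := fun t => ∫ σ in t..b, ‖g σ‖
  have hℓlim : Tendsto ℓ (𝓝[<] b) (𝓝 0) := tendsto_intervalIntegral_nhdsLT hac.1.norm hab
  obtain ⟨r, hr, hball⟩ := Metric.mem_nhds_iff.1 hs
  obtain ⟨t, ht, htr, htc⟩ : ∃ t ∈ Ioo a b, ℓ t < r ∧ K * √(ℓ t) < c :=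
    ((eventually_mem_set.2 (Ioo_mem_nhdsLT hab)).and ((hℓlim.eventually_lt_const hr).and
      ((hℓlim.sqrt.const_mul (K : ℝ)).eventually_lt_const (by simpa using hc)))).exists
  have hℓpos : 0 < ℓ t := hdom.integral_norm_pos_of_isCalibrating hm hh hac hcal hcol ht
  have hlow : c * √(ℓ t) ≤ u (f b) - u (f t) :=
    (ENNReal.ofReal_le_ofReal_iff'.1 ((hac.ofReal_mul_sqrt_le_actionOn (hm k₀).le hk₀ hij hcij
      ht.1.le ht.2.le hℓpos).trans (hdom.actionOn_le_of_isCalibrating hh hac hcal ht))).resolve_right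
      (not_le.2 (by positivity))
  have hdist : dist (f t) (f b) ≤ ℓ t := hac.dist_le_integral_norm ht.1.le le_rfl ht.2.le
  have hts : f t ∈ s := hball (Metric.mem_ball.2 (hdist.trans_lt htr))
  have hup : u (f b) - u (f t) ≤ K * ℓ t :=
    (hψ.sub_le_mul_dist_of_le_of_eq hψu (mem_of_mem_nhds hs) hψb hts).trans (by gcongr)
  refine lt_irrefl (c * √(ℓ t)) ?_
  calc c * √(ℓ t) ≤ K * ℓ t := hlow.trans hup
    _ = K * √(ℓ t) * √(ℓ t) := by rw [mul_assoc, Real.mul_self_sqrt hℓpos.le]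
    _ < c * √(ℓ t) := mul_lt_mul_of_pos_right htc (Real.sqrt_pos.2 hℓpos)

theorem stmt10
    {E : Type*} [NormedAddCommGroup E] [InnerProductSpace ℝ E] [FiniteDimensional ℝ E]
    {N : ℕ} (hN : 2 ≤ N) (m : Fin N → ℝ) (hm : ∀ i, 0 < m i)
    (h : ℝ) (hh : 0 ≤ h) (u : (Fin N → E) → ℝ)
    (hu : Continuous u) (hdom : Dominated m h u)
    (f g : ℝ → Fin N → E) (a b : ℝ) (hab : a < b)
    (hac : IsACOn f g a b)
    (hcal : actionOnH m h f g a b ≠ ⊤ ∧ (actionOnH m h f g a b).toReal = u (f b) - u (f a))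
    (hcol : f b ∉ Omega) :
    ¬ ∃ (ψ : (Fin N → E) → ℝ) (s : Set (Fin N → E)) (K : NNReal),
        s ∈ nhds (f b) ∧ LipschitzOnWith K ψ s ∧ (∀ z ∈ s, ψ z ≤ u z) ∧ ψ (f b) = u (f b) :=
  stmt10_general m hm h hh u hdom f g a b hab hac hcal hcol

end NBodyHJ
end
end

section
/- (Chazy's Lemma.) Let V be a finite-dimensional real inner product space, let W ⊆ V be an open set invariant under multiplication by positive scalars, and let U : W → ℝ be a C² function homogeneous of degree −1 (U(λx) = λ⁻¹U(x) for all λ > 0, x ∈ W). Let x : [0,+∞) → W be a solution of ẍ = ∇U(x) with x(t) = t·a + o(t) as t → +∞ for some a ∈ W. Then: (1) ẋ(t) → a as t → +∞. (2) For every ε > 0 there exist t₁ > 0 and δ > 0 such that every maximal solution y : [0,T) → W of ÿ = ∇U(y) with ‖y(0) − x(0)‖ < δ and ‖ẏ(0) − ẋ(0)‖ < δ satisfies: T = +∞, ‖y(t) − t·a‖ < t·ε for all t > t₁, and there exists b ∈ W with ‖b − a‖ < ε such that y(t) = t·b + o(t) as t → +∞. -/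
/-!
By homogeneity, `∇U p = O(1/t²)` on the cone `‖p - t • a‖ ≤ r t`. A solution staying in that cone
has integrable acceleration, so its velocity converges to some `b`, and then `y t / t → b` as well;
for `x` this forces `b = a`. For stability, take `t₁` so large that `(x t₁, ẋ t₁)` is close to
`(t₁ • a, a)` and the force tail `∫_{t₁}^∞ M / t²` is small. Grönwall keeps nearby solutions close
to `x` on `[0, t₁]`, and a continuity argument keeps them in the cone afterwards. On every bounded
time interval they then stay in a compact subset of `W` with bounded velocity, so Picard–Lindelöf
continues them: maximal solutions are global.
-/

open MeasureTheory Filter Topology Set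
open scoped ENNReal

noncomputable section

open Metric
open scoped NNReal Pointwise

theorem ContinuousOn.forall_lt_of_forall_Ico_le_imp_lt {φ ψ : ℝ → ℝ} {a b : ℝ}
    (hφ : ContinuousOn φ (Icc a b)) (hψ : ContinuousOn ψ (Icc a b))
    (h : ∀ t ∈ Icc a b, (∀ u ∈ Ico a t, φ u ≤ ψ u) → φ t < ψ t) :
    ∀ t ∈ Icc a b, φ t < ψ t := by
  by_contra! ⟨t, ht, hbad⟩
  have hK : IsCompact (Icc a b ∩ (fun t => ψ t - φ t) ⁻¹' Iic 0) :=
    isCompact_Icc.of_isClosed_subset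
      ((hψ.sub hφ).preimage_isClosed_of_isClosed isClosed_Icc isClosed_Iic) inter_subset_left
  obtain ⟨t₀, ⟨ht₀, hbad₀⟩, hmin⟩ := hK.exists_isLeast ⟨t, ht, sub_nonpos.2 hbad⟩
  refine (h t₀ ht₀ fun u hu => ?_).not_ge (sub_nonpos.1 hbad₀)
  by_contra! hu'
  exact (hmin ⟨⟨hu.1, hu.2.le.trans ht₀.2⟩, sub_nonpos.2 hu'.le⟩).not_gt hu.2

variable {E : Type*} [NormedAddCommGroup E] [NormedSpace ℝ E]

theorem norm_sub_le_of_norm_deriv_le_inv_sq {f f' : ℝ → E} {s b M : ℝ} (hs : 0 < s) (hsb : s ≤ b)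
    (hf : ∀ t ∈ Icc s b, HasDerivAt f (f' t) t) (hbound : ∀ t ∈ Ico s b, ‖f' t‖ ≤ M / t ^ 2) :
    ‖f b - f s‖ ≤ M / s - M / b := by
  have hB : ∀ t ∈ Icc s b, HasDerivAt (fun t => M / s - M / t) (M / t ^ 2) t := fun t ht => by
    simpa [div_eq_mul_inv, pow_two, mul_inv] using
      ((hasDerivAt_inv (hs.trans_le ht.1).ne').const_mul M).const_sub (M / s)
  refine image_norm_le_of_norm_deriv_right_le_deriv_boundary' (f := fun t => f t - f s)
    (fun t ht => ((hf t ht).sub_const (f s)).continuousAt.continuousWithinAt)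
    (fun t ht => ((hf t (Ico_subset_Icc_self ht)).sub_const (f s)).hasDerivWithinAt)
    (by simp) (fun t ht => (hB t ht).continuousAt.continuousWithinAt)
    (fun t ht => (hB t (Ico_subset_Icc_self ht)).hasDerivWithinAt) hbound ⟨hsb, le_rfl⟩

theorem exists_tendsto_of_norm_deriv_le_inv_sq [CompleteSpace E] {f f' : ℝ → E} {s M : ℝ}
    (hs : 0 < s) (hf : ∀ t ∈ Ici s, HasDerivAt f (f' t) t)
    (hbound : ∀ t ∈ Ici s, ‖f' t‖ ≤ M / t ^ 2) :
    ∃ b, Tendsto f atTop (𝓝 b) := by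
  refine cauchySeq_tendsto_of_complete (Metric.cauchySeq_iff'.2 fun ε hε => ?_)
  refine ⟨max s (2 * M / ε), fun t ht => ?_⟩
  set N := max s (2 * M / ε)
  have hN : 0 < N := hs.trans_le (le_max_left _ _)
  have hM : 0 ≤ M := by
    simpa using (le_div_iff₀ (pow_pos hs 2)).1 ((norm_nonneg _).trans (hbound s self_mem_Ici))
  rw [dist_eq_norm]
  calc ‖f t - f N‖ ≤ M / N - M / t :=
        norm_sub_le_of_norm_deriv_le_inv_sq hN ht (fun u hu => hf u ((le_max_left _ _).trans hu.1))
          fun u hu => hbound u ((le_max_left _ _).trans hu.1)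
    _ ≤ M / N := by have := hN.trans_le ht; linarith [div_nonneg hM this.le]
    _ < ε := by
        rw [div_lt_iff₀ hN]
        have : 2 * M / ε ≤ N := le_max_right _ _
        rw [div_le_iff₀ hε] at this
        nlinarith

theorem tendsto_inv_smul_of_tendsto_deriv {f g : ℝ → E} {b : E} {S : ℝ}
    (hf : ∀ t ∈ Ici S, HasDerivAt f (g t) t) (hg : Tendsto g atTop (𝓝 b)) :
    Tendsto (fun t => t⁻¹ • f t) atTop (𝓝 b) := by
  set h : ℝ → E := fun t => f t - t • b
  have hlo : h =o[atTop] fun t => t := by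
    refine Asymptotics.isLittleO_iff.2 fun c hc => ?_
    obtain ⟨S₁, hS₁⟩ := eventually_atTop.1
      ((Metric.tendsto_nhds.1 hg (c / 2) (half_pos hc)).and (eventually_ge_atTop (max S 0)))
    have hmv : ∀ t, S₁ ≤ t → ‖h t - h S₁‖ ≤ c / 2 * (t - S₁) := fun t ht =>
      norm_image_sub_le_of_norm_deriv_le_segment' (f' := fun u => g u - b)
        (fun u hu => (((hf u (le_of_max_le_left (hS₁ u hu.1).2)).sub
          ((hasDerivAt_id u).smul_const b)).congr_deriv (by simp)).hasDerivWithinAt)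
        (fun u hu => (dist_eq_norm (g u) b ▸ (hS₁ u hu.1).1).le) t ⟨ht, le_rfl⟩
    filter_upwards [eventually_ge_atTop S₁, eventually_ge_atTop 0,
      eventually_ge_atTop (2 * ‖h S₁‖ / c)] with t ht ht0 htS
    have : ‖h S₁‖ ≤ c / 2 * t := by
      rw [div_le_iff₀ hc] at htS; linarith
    calc ‖h t‖ ≤ ‖h S₁‖ + ‖h t - h S₁‖ := norm_le_insert' _ _
      _ ≤ c / 2 * t + c / 2 * (t - S₁) := add_le_add this (hmv t ht)
      _ ≤ c * ‖t‖ := by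
        rw [Real.norm_of_nonneg ht0]
        nlinarith [le_of_max_le_right (hS₁ S₁ le_rfl).2]
  have hlim := hlo.tendsto_inv_smul_nhds_zero.add_const b
  rw [zero_add] at hlim
  refine hlim.congr' ?_
  filter_upwards [eventually_gt_atTop 0] with t ht
  simp [h, smul_sub, smul_smul, inv_mul_cancel₀ ht.ne']

theorem norm_sub_smul_eq_mul_dist {t : ℝ} (ht : 0 < t) (p b : E) :
    ‖p - t • b‖ = t * dist (t⁻¹ • p) b := by
  rw [dist_eq_norm, ← norm_smul_of_nonneg ht.le, smul_sub, smul_inv_smul₀ ht.ne']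

theorem eventually_norm_sub_smul_le_of_tendsto_inv_smul {f : ℝ → E} {b : E}
    (hf : Tendsto (fun t => t⁻¹ • f t) atTop (𝓝 b)) {c : ℝ} (hc : 0 < c) :
    ∀ᶠ t in atTop, ‖f t - t • b‖ ≤ c * t := by
  filter_upwards [Metric.tendsto_nhds.1 hf c hc, eventually_gt_atTop 0] with t hdist ht
  rw [norm_sub_smul_eq_mul_dist ht, mul_comm]
  exact mul_le_mul_of_nonneg_right hdist.le ht.le

theorem dist_le_of_lipschitzOnWith_closedBall {f : E → E} {X Y : ℝ → E} {a b ρ δ : ℝ} {L : ℝ≥0}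
    (hlip : ∀ t ∈ Ico a b, LipschitzOnWith L f (closedBall (X t) ρ))
    (hX : ∀ t ∈ Icc a b, HasDerivAt X (f (X t)) t) (hY : ∀ t ∈ Icc a b, HasDerivAt Y (f (Y t)) t)
    (h0 : dist (Y a) (X a) ≤ δ) (hδ : δ * Real.exp (L * (b - a)) < ρ) :
    ∀ t ∈ Icc a b, dist (Y t) (X t) ≤ δ * Real.exp (L * (t - a)) := by
  have hδ0 : 0 ≤ δ := dist_nonneg.trans h0
  have hρ : 0 < ρ := (mul_nonneg hδ0 (Real.exp_pos _).le).trans_lt hδ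
  have hXc : ContinuousOn X (Icc a b) := fun t ht => (hX t ht).continuousAt.continuousWithinAt
  have hYc : ContinuousOn Y (Icc a b) := fun t ht => (hY t ht).continuousAt.continuousWithinAt
  have hgron : ∀ t ∈ Icc a b, (∀ u ∈ Ico a t, dist (Y u) (X u) ≤ ρ) →
      dist (Y t) (X t) ≤ δ * Real.exp (L * (t - a)) := fun t ht hpast =>
    have hsub : Icc a t ⊆ Icc a b := Icc_subset_Icc_right ht.2
    dist_le_of_trajectories_ODE_of_mem (v := fun _ => f) (s := fun u => closedBall (X u) ρ)
      (fun u hu => hlip u ⟨hu.1, hu.2.trans_le ht.2⟩) (hYc.mono hsub)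
      (fun u hu => (hY u (hsub (Ico_subset_Icc_self hu))).hasDerivWithinAt)
      (fun u hu => mem_closedBall.2 (hpast u hu)) (hXc.mono hsub)
      (fun u hu => (hX u (hsub (Ico_subset_Icc_self hu))).hasDerivWithinAt)
      (fun _ _ => mem_closedBall_self hρ.le) h0 t ⟨ht.1, le_rfl⟩
  have hnear : ∀ t ∈ Icc a b, dist (Y t) (X t) < ρ :=
    ContinuousOn.forall_lt_of_forall_Ico_le_imp_lt (φ := fun t => dist (Y t) (X t))
      (continuous_dist.comp_continuousOn (hYc.prodMk hXc)) continuousOn_const fun t ht hpast =>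
      (hgron t ht hpast).trans_lt <| (mul_le_mul_of_nonneg_left (Real.exp_le_exp.2 <|
        mul_le_mul_of_nonneg_left (by linarith [ht.2]) L.2) hδ0).trans_lt hδ
  exact fun t ht => hgron t ht fun u hu => (hnear u ⟨hu.1, hu.2.le.trans ht.2⟩).le

/-- Picard–Lindelöf at a time `τ` close to `T` gives a solution on `[τ - σ, τ + σ]` with `σ`
independent of `τ`; glued to `γ` at `τ`, it continues `γ` past `T`. -/
theorem exists_extension_of_lipschitzOnWith_closedBall [CompleteSpace E] {f : E → E}
    {K : Set E} {ρ : ℝ} {L R : ℝ≥0} (hρ : 0 < ρ)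
    (hlip : ∀ p ∈ K, LipschitzOnWith L f (closedBall p ρ))
    (hbound : ∀ p ∈ K, ∀ q ∈ closedBall p ρ, ‖f q‖ ≤ R) {γ : ℝ → E} {t₀ T : ℝ} (hT : t₀ < T)
    (hγ : ∀ t ∈ Ico t₀ T, γ t ∈ K ∧ HasDerivAt γ (f (γ t)) t) :
    ∃ T' > T, ∃ γ' : ℝ → E, γ' t₀ = γ t₀ ∧
      ∀ t ∈ Ico t₀ T', (∃ p ∈ K, γ' t ∈ closedBall p ρ) ∧ HasDerivAt γ' (f (γ' t)) t := by
  set σ : ℝ := ρ / (R + 1)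
  have hσ : 0 < σ := by positivity
  have hRσ : R * σ < ρ := by
    rw [mul_div_assoc', div_lt_iff₀ (by positivity)]
    nlinarith
  set τ := max t₀ (T - σ / 2)
  have hτ : τ ∈ Ico t₀ T := ⟨le_max_left _ _, max_lt hT (by linarith)⟩
  have hτK := (hγ τ hτ).1
  have hpl : IsPicardLindelof (fun _ => f) (tmin := τ - σ) (tmax := τ + σ)
      ⟨τ, by linarith, by linarith⟩ (γ τ) ρ.toNNReal 0 R L :=
    { lipschitzOnWith := fun _ _ => by simpa [hρ.le] using hlip _ hτK
      continuousOn := fun _ _ => continuousOn_const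
      norm_le := fun _ _ q hq => hbound _ hτK q (by simpa [hρ.le] using hq)
      mul_max_le := by
        simp only [NNReal.coe_zero, sub_zero, Real.coe_toNNReal _ hρ.le, add_sub_cancel_left,
          sub_sub_cancel, max_self]
        exact hRσ.le }
  obtain ⟨α, hατ, hα⟩ := hpl.exists_eq_forall_mem_Icc_hasDerivWithinAt₀
  have hαderiv : ∀ t ∈ Ioo (τ - σ) (τ + σ), HasDerivAt α (f (α t)) t := fun t ht =>
    (hα t (Ioo_subset_Icc_self ht)).hasDerivAt (Icc_mem_nhds ht.1 ht.2)
  have hsub : Icc τ (τ + 3 * σ / 4) ⊆ Ioo (τ - σ) (τ + σ) := fun t ht =>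
    ⟨by linarith [ht.1], by linarith [ht.2]⟩
  have hαball : ∀ t ∈ Icc τ (τ + 3 * σ / 4), dist (α t) (γ τ) < ρ := by
    have hαc : ContinuousOn α (Icc τ (τ + 3 * σ / 4)) := fun t ht =>
      (hαderiv t (hsub ht)).continuousAt.continuousWithinAt
    refine ContinuousOn.forall_lt_of_forall_Ico_le_imp_lt (φ := fun t => dist (α t) (γ τ))
      (continuous_dist.comp_continuousOn (hαc.prodMk continuousOn_const)) continuousOn_const
      fun t ht hpast => ?_
    have hmv := norm_image_sub_le_of_norm_deriv_le_segment' (C := R)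
      (fun u hu => (hαderiv u (hsub ⟨hu.1, hu.2.trans ht.2⟩)).hasDerivWithinAt)
      (fun u hu => hbound _ hτK _ (mem_closedBall.2 (hpast u hu))) t ⟨ht.1, le_rfl⟩
    rw [hατ, ← dist_eq_norm] at hmv
    nlinarith [ht.2, R.2]
  set γ' : ℝ → E := fun t => if t ≤ τ then γ t else α t
  have hγ'α : ∀ t, τ ≤ t → γ' t = α t := fun t ht => by
    by_cases h : t ≤ τ
    · simp [γ', le_antisymm h ht, hατ]
    · simp [γ', h]
  refine ⟨τ + 3 * σ / 4, by linarith [le_max_right t₀ (T - σ / 2)], γ', if_pos hτ.1,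
    fun t ht => ?_⟩
  rcases lt_trichotomy t τ with htτ | htτ | htτ
  · have hγt := hγ t ⟨ht.1, htτ.trans hτ.2⟩
    have hev : γ' =ᶠ[𝓝 t] γ := eventually_of_mem (Iic_mem_nhds htτ) fun u hu => if_pos hu
    rw [hev.eq_of_nhds]
    exact ⟨⟨γ t, hγt.1, mem_closedBall_self hρ.le⟩, hev.hasDerivAt_iff.2 hγt.2⟩
  · rw [htτ]
    have hleft : HasDerivWithinAt γ' (f (γ τ)) (Iic τ) τ :=
      (hγ τ hτ).2.hasDerivWithinAt.congr (fun u hu => if_pos hu) (if_pos le_rfl)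
    have hright : HasDerivWithinAt γ' (f (γ τ)) (Ici τ) τ := by
      have := (hαderiv τ ⟨by linarith, by linarith⟩).hasDerivWithinAt (s := Ici τ)
      rw [hατ] at this
      exact this.congr (fun u hu => hγ'α u hu) (hγ'α τ le_rfl)
    have hγ'τ : γ' τ = γ τ := if_pos le_rfl
    rw [hγ'τ]
    refine ⟨⟨γ τ, hτK, mem_closedBall_self hρ.le⟩, ?_⟩
    simpa [Iic_union_Ici] using hleft.union hright
  · have hev : γ' =ᶠ[𝓝 t] α := eventually_of_mem (Ioi_mem_nhds htτ) fun u hu => hγ'α u hu.le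
    rw [hev.eq_of_nhds]
    exact ⟨⟨γ τ, hτK, (hαball t ⟨htτ.le, ht.2.le⟩).le⟩,
      hev.hasDerivAt_iff.2 (hαderiv t (hsub ⟨htτ.le, ht.2.le⟩))⟩

theorem closedBall_subset_cthickening_prod {α E : Type*} [PseudoMetricSpace α]
    [SeminormedAddCommGroup E] {A : Set α} {p : α × E} (hp : p.1 ∈ A) (ρ : ℝ) :
    closedBall p ρ ⊆ cthickening ρ A ×ˢ closedBall 0 (‖p.2‖ + ρ) := by
  intro q hq
  rw [mem_closedBall, Prod.dist_eq, max_le_iff] at hq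
  refine ⟨mem_cthickening_of_dist_le _ _ _ _ hp hq.1, ?_⟩
  rw [mem_closedBall, dist_zero_right]
  linarith [norm_le_insert' q.2 p.2, dist_eq_norm q.2 p.2]

section Newton

variable {V : Type*} [NormedAddCommGroup V] [InnerProductSpace ℝ V] [CompleteSpace V]

def IsNewtonSolOn (U : V → ℝ) (W : Set V) (s : Set ℝ) (y w : ℝ → V) : Prop :=
  ∀ t ∈ s, y t ∈ W ∧ HasDerivAt y (w t) t ∧ HasDerivAt w (gradient U (y t)) t

def newtonField (U : V → ℝ) (p : V × V) : V × V := (p.2, gradient U p.1)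

variable {U : V → ℝ} {W : Set V} {s : Set ℝ} {y w : ℝ → V}

namespace IsNewtonSolOn

theorem mono (h : IsNewtonSolOn U W s y w) {s' : Set ℝ} (hs : s' ⊆ s) :
    IsNewtonSolOn U W s' y w :=
  fun t ht => h t (hs ht)

theorem continuousOn (h : IsNewtonSolOn U W s y w) : ContinuousOn y s :=
  fun t ht => (h t ht).2.1.continuousAt.continuousWithinAt

theorem continuousOn_deriv (h : IsNewtonSolOn U W s y w) : ContinuousOn w s :=
  fun t ht => (h t ht).2.2.continuousAt.continuousWithinAt

theorem hasDerivAt_newtonField (h : IsNewtonSolOn U W s y w) {t : ℝ} (ht : t ∈ s) :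
    HasDerivAt (fun t => (y t, w t)) (newtonField U (y t, w t)) t :=
  (h t ht).2.1.prodMk (h t ht).2.2

end IsNewtonSolOn

theorem IsNewtonSolOn.of_hasDerivAt_newtonField {Y : ℝ → V × V}
    (hY : ∀ t ∈ s, (Y t).1 ∈ W ∧ HasDerivAt Y (newtonField U (Y t)) t) :
    IsNewtonSolOn U W s (fun t => (Y t).1) (fun t => (Y t).2) :=
  fun t ht => ⟨(hY t ht).1, (hasFDerivAt_fst (𝕜 := ℝ) (p := Y t)).comp_hasDerivAt t (hY t ht).2,
    (hasFDerivAt_snd (𝕜 := ℝ) (p := Y t)).comp_hasDerivAt t (hY t ht).2⟩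

theorem continuousOn_gradient (hW : IsOpen W) (hU : ContDiffOn ℝ 1 U W) :
    ContinuousOn (gradient U) W :=
  (InnerProductSpace.toDual ℝ V).symm.continuous.comp_continuousOn
    (hU.continuousOn_fderiv_of_isOpen hW le_rfl)

theorem locallyLipschitzOn_gradient (hW : IsOpen W) (hU : ContDiffOn ℝ 2 U W) :
    LocallyLipschitzOn W (gradient U) := by
  have hgrad : ContDiffOn ℝ 1 (gradient U) W :=
    (InnerProductSpace.toDual ℝ V).symm.toContinuousLinearEquiv.contDiff.comp_contDiffOn
      (hU.fderiv_of_isOpen hW (by norm_num))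
  intro p hp
  obtain ⟨K, t, ht, hK⟩ := (hgrad.contDiffAt (hW.mem_nhds hp)).exists_lipschitzOnWith
  exact ⟨K, t, mem_nhdsWithin_of_mem_nhds ht, hK⟩

theorem continuousOn_newtonField (hW : IsOpen W) (hU : ContDiffOn ℝ 1 U W) :
    ContinuousOn (newtonField U) (W ×ˢ univ) :=
  continuous_snd.continuousOn.prodMk
    ((continuousOn_gradient hW hU).comp continuous_fst.continuousOn fun _ (hp : _ ∈ _ ×ˢ _) => hp.1)

theorem exists_lipschitzOnWith_newtonField (hW : IsOpen W) (hU : ContDiffOn ℝ 2 U W) {A : Set V}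
    (hA : IsCompact A) (hAW : A ⊆ W) : ∃ L, LipschitzOnWith L (newtonField U) (A ×ˢ univ) := by
  obtain ⟨K, hK⟩ :=
    ((locallyLipschitzOn_gradient hW hU).mono hAW).exists_lipschitzOnWith_of_compact hA
  exact ⟨_, LipschitzWith.prod_snd.lipschitzOnWith.prodMk
    (hK.comp LipschitzWith.prod_fst.lipschitzOnWith fun _ (hp : _ ∈ _ ×ˢ _) => hp.1)⟩

theorem gradient_smul_of_homogeneous (hW : IsOpen W) (hU : DifferentiableOn ℝ U W) {l : ℝ}
    (hl : l ≠ 0) (hhom : ∀ x ∈ W, U (l • x) = l⁻¹ * U x) {p : V} (hp : p ∈ W) (hlp : l • p ∈ W) :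
    gradient U (l • p) = (l ^ 2)⁻¹ • gradient U p := by
  have hchain : HasFDerivAt (fun q => U (l • q)) (l • fderiv ℝ U (l • p)) p :=
    ((hU.differentiableAt (hW.mem_nhds hlp)).hasFDerivAt.comp p
      ((hasFDerivAt_id p).const_smul l)).congr_fderiv (by ext; simp)
  have hscale : HasFDerivAt (fun q => U (l • q)) (l⁻¹ • fderiv ℝ U p) p :=
    ((hU.differentiableAt (hW.mem_nhds hp)).hasFDerivAt.const_smul l⁻¹).congr_of_eventuallyEq
      (eventually_of_mem (hW.mem_nhds hp) fun q hq => by simp [hhom q hq])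
  have hfd : fderiv ℝ U (l • p) = (l ^ 2)⁻¹ • fderiv ℝ U p := by
    rw [← smul_right_inj hl, hchain.unique hscale, smul_smul, pow_two, mul_inv, ← mul_assoc,
      mul_inv_cancel₀ hl, one_mul]
  simp only [gradient, hfd, map_smul]

/-- `∇U` is homogeneous of degree `-2`, so its bound on `closedBall a r` spreads along the cone. -/
theorem exists_norm_gradient_le_of_closedBall_subset [FiniteDimensional ℝ V] (hW : IsOpen W)
    (hWcone : ∀ x ∈ W, ∀ l : ℝ, 0 < l → l • x ∈ W) (hU : ContDiffOn ℝ 1 U W)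
    (hhom : ∀ x ∈ W, ∀ l : ℝ, 0 < l → U (l • x) = l⁻¹ * U x) {a : V} {r : ℝ}
    (har : closedBall a r ⊆ W) :
    ∃ M, 0 ≤ M ∧ ∀ p t, 0 < t → ‖p - t • a‖ ≤ r * t → ‖gradient U p‖ ≤ M / t ^ 2 := by
  obtain ⟨M, hM⟩ := (isCompact_closedBall a r).exists_bound_of_continuousOn
    ((continuousOn_gradient hW hU).mono har)
  refine ⟨max M 0, le_max_right _ _, fun p t ht hp => ?_⟩
  have hq : t⁻¹ • p ∈ closedBall a r := by
    rw [norm_sub_smul_eq_mul_dist ht, mul_comm r] at hp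
    exact mem_closedBall.2 (le_of_mul_le_mul_left hp ht)
  rw [← smul_inv_smul₀ ht.ne' p, gradient_smul_of_homogeneous hW (hU.differentiableOn one_ne_zero)
    ht.ne' (fun x hx => hhom x hx t ht) (har hq) (hWcone _ (har hq) t ht), norm_smul,
    Real.norm_of_nonneg (by positivity), inv_mul_eq_div]
  exact div_le_div_of_nonneg_right ((hM _ hq).trans (le_max_left _ _)) (by positivity)

namespace IsNewtonSolOn

variable {a : V} {r M : ℝ}

theorem exists_tendsto_of_norm_sub_smul_le
    (hcone : ∀ p t, 0 < t → ‖p - t • a‖ ≤ r * t → ‖gradient U p‖ ≤ M / t ^ 2)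
    {t₁ : ℝ} (ht₁ : 0 < t₁) (hsol : IsNewtonSolOn U W (Ici t₁) y w)
    (hy : ∀ t ∈ Ici t₁, ‖y t - t • a‖ ≤ r * t) :
    ∃ b, Tendsto w atTop (𝓝 b) ∧ Tendsto (fun t => t⁻¹ • y t) atTop (𝓝 b) := by
  obtain ⟨b, hb⟩ := exists_tendsto_of_norm_deriv_le_inv_sq ht₁ (fun t ht => (hsol t ht).2.2)
    fun t ht => hcone _ t (ht₁.trans_le ht) (hy t ht)
  exact ⟨b, hb, tendsto_inv_smul_of_tendsto_deriv (fun t ht => (hsol t ht).2.1) hb⟩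

theorem tendsto_deriv_of_tendsto_inv_smul
    (hcone : ∀ p t, 0 < t → ‖p - t • a‖ ≤ r * t → ‖gradient U p‖ ≤ M / t ^ 2) (hr : 0 < r)
    {t₀ : ℝ} (hsol : IsNewtonSolOn U W (Ici t₀) y w)
    (hlim : Tendsto (fun t => t⁻¹ • y t) atTop (𝓝 a)) :
    Tendsto w atTop (𝓝 a) := by
  obtain ⟨t₁, ht₁⟩ := eventually_atTop.1 <|
    (eventually_norm_sub_smul_le_of_tendsto_inv_smul hlim hr).and
      ((eventually_gt_atTop 0).and (eventually_ge_atTop t₀))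
  obtain ⟨-, ht₁0, ht₀t₁⟩ := ht₁ t₁ le_rfl
  obtain ⟨b, hwb, hyb⟩ := (hsol.mono (Ici_subset_Ici.2 ht₀t₁)).exists_tendsto_of_norm_sub_smul_le
    hcone ht₁0 fun t ht => (ht₁ t ht).1
  rwa [tendsto_nhds_unique hlim hyb]

/-- While `y` stays in the cone `‖y t - t • a‖ ≤ η t`, the force is at most `M / t²`, so `w` moves
by at most `M / t₁` and `y` drifts away from the ray at speed at most `η / 2`: it never reaches the
boundary of the cone. -/
theorem norm_sub_smul_le_of_near_ray
    (hcone : ∀ p t, 0 < t → ‖p - t • a‖ ≤ r * t → ‖gradient U p‖ ≤ M / t ^ 2) (hM : 0 ≤ M)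
    {η t₁ t₂ : ℝ} (hη : 0 < η) (hηr : η ≤ r) (ht₁ : 0 < t₁) (hMt₁ : M / t₁ ≤ η / 4)
    (hsol : IsNewtonSolOn U W (Icc t₁ t₂) y w)
    (hy : ‖y t₁ - t₁ • a‖ ≤ η / 4 * t₁) (hw : ‖w t₁ - a‖ ≤ η / 4) :
    ∀ t ∈ Icc t₁ t₂, ‖y t - t • a‖ ≤ η / 2 * t ∧ ‖w t - a‖ ≤ η / 2 := by
  have hw_of : ∀ t ∈ Icc t₁ t₂, (∀ u ∈ Ico t₁ t, ‖y u - u • a‖ ≤ η * u) →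
      ‖w t - a‖ ≤ η / 2 := by
    intro t ht hpast
    have hdecay := norm_sub_le_of_norm_deriv_le_inv_sq ht₁ ht.1
      (fun u hu => (hsol u ⟨hu.1, hu.2.trans ht.2⟩).2.2) fun u hu =>
        hcone _ u (ht₁.trans_le hu.1) ((hpast u hu).trans
          (mul_le_mul_of_nonneg_right hηr (ht₁.trans_le hu.1).le))
    have : 0 ≤ M / t := div_nonneg hM (ht₁.trans_le ht.1).le
    calc ‖w t - a‖ ≤ ‖w t₁ - a‖ + ‖w t - w t₁‖ := by
          simpa using norm_add_le (w t₁ - a) (w t - w t₁)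
      _ ≤ η / 2 := by linarith
  have hy_of : ∀ t ∈ Icc t₁ t₂, (∀ u ∈ Ico t₁ t, ‖y u - u • a‖ ≤ η * u) →
      ‖y t - t • a‖ ≤ η / 2 * t := by
    intro t ht hpast
    have hmv := norm_image_sub_le_of_norm_deriv_le_segment' (f := fun u => y u - u • a)
      (f' := fun u => w u - a)
      (fun u hu => (((hsol u ⟨hu.1, hu.2.trans ht.2⟩).2.1.sub
        ((hasDerivAt_id u).smul_const a)).congr_deriv (by simp)).hasDerivWithinAt)
      (fun u hu => hw_of u ⟨hu.1, hu.2.le.trans ht.2⟩ fun v hv => hpast v ⟨hv.1, hv.2.trans hu.2⟩)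
      t ⟨ht.1, le_rfl⟩
    calc ‖y t - t • a‖ ≤ ‖y t₁ - t₁ • a‖ + ‖(y t - t • a) - (y t₁ - t₁ • a)‖ :=
          norm_le_insert' _ _
      _ ≤ η / 4 * t₁ + η / 2 * (t - t₁) := add_le_add hy hmv
      _ ≤ η / 2 * t := by nlinarith [ht.1]
  have hnear : ∀ t ∈ Icc t₁ t₂, ‖y t - t • a‖ < η * t :=
    ContinuousOn.forall_lt_of_forall_Ico_le_imp_lt
      ((hsol.continuousOn.sub (continuousOn_id.smul continuousOn_const)).norm)
      (continuousOn_const.mul continuousOn_id) fun t ht hpast =>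
        (hy_of t ht hpast).trans_lt (by nlinarith [ht₁.trans_le ht.1])
  intro t ht
  have hpast : ∀ u ∈ Ico t₁ t, ‖y u - u • a‖ ≤ η * u := fun u hu =>
    (hnear u ⟨hu.1, hu.2.le.trans ht.2⟩).le
  exact ⟨hy_of t ht hpast, hw_of t ht hpast⟩

section FiniteDimensional

variable [FiniteDimensional ℝ V]

theorem exists_extension (hW : IsOpen W) (hU : ContDiffOn ℝ 2 U W) {A : Set V}
    (hA : IsCompact A) (hAW : A ⊆ W) {B T : ℝ} (hT : 0 < T)
    (hsol : IsNewtonSolOn U W (Ico 0 T) y w) (hbd : ∀ t ∈ Ico 0 T, y t ∈ A ∧ ‖w t‖ ≤ B) :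
    ∃ (T' : ℝ) (z wz : ℝ → V), T < T' ∧ IsNewtonSolOn U W (Ico 0 T') z wz ∧
      z 0 = y 0 ∧ wz 0 = w 0 := by
  obtain ⟨ρ, hρ, hρW⟩ := hA.exists_cthickening_subset_open hW hAW
  obtain ⟨L, hL⟩ := exists_lipschitzOnWith_newtonField hW hU hA.cthickening hρW
  obtain ⟨R, hR⟩ :=
    (hA.cthickening.prod (isCompact_closedBall (0 : V) (B + ρ))).exists_bound_of_continuousOn
      ((continuousOn_newtonField hW (hU.of_le one_le_two)).mono (prod_mono hρW (subset_univ _)))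
  have hball : ∀ p ∈ A ×ˢ closedBall (0 : V) B,
      closedBall p ρ ⊆ cthickening ρ A ×ˢ closedBall 0 (B + ρ) := fun p hp =>
    (closedBall_subset_cthickening_prod hp.1 ρ).trans (prod_mono le_rfl
      (closedBall_subset_closedBall (by linarith [mem_closedBall_zero_iff.1 hp.2])))
  obtain ⟨T', hT', Y, hY0, hY⟩ := exists_extension_of_lipschitzOnWith_closedBall
    (f := newtonField U) (L := L) (R := R.toNNReal) hρ
    (fun p hp => hL.mono ((hball p hp).trans (prod_mono le_rfl (subset_univ _))))
    (fun p hp q hq => (hR q (hball p hp hq)).trans (Real.le_coe_toNNReal R)) hT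
    fun t ht => ⟨⟨(hbd t ht).1, mem_closedBall_zero_iff.2 (hbd t ht).2⟩,
      hsol.hasDerivAt_newtonField ht⟩
  refine ⟨T', fun t => (Y t).1, fun t => (Y t).2, hT',
    IsNewtonSolOn.of_hasDerivAt_newtonField fun t ht => ⟨?_, (hY t ht).2⟩,
    congrArg Prod.fst hY0, congrArg Prod.snd hY0⟩
  obtain ⟨p, hp, hYp⟩ := (hY t ht).1
  exact hρW (hball p hp hYp).1

theorem exists_forall_near (hW : IsOpen W) (hU : ContDiffOn ℝ 2 U W) {x v : ℝ → V} {t₁ : ℝ}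
    (hx : IsNewtonSolOn U W (Icc 0 t₁) x v) {ε : ℝ} (hε : 0 < ε) :
    ∃ δ > 0, ∃ A, IsCompact A ∧ A ⊆ W ∧ ∀ t ∈ Icc 0 t₁, ∀ y w : ℝ → V,
      IsNewtonSolOn U W (Icc 0 t) y w → ‖y 0 - x 0‖ < δ → ‖w 0 - v 0‖ < δ →
      y t ∈ A ∧ ‖y t - x t‖ ≤ ε ∧ ‖w t - v t‖ ≤ ε := by
  have hK : IsCompact (x '' Icc 0 t₁) := isCompact_Icc.image_of_continuousOn hx.continuousOn
  obtain ⟨ρ, hρ, hρW⟩ :=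
    hK.exists_cthickening_subset_open hW (image_subset_iff.2 fun t ht => (hx t ht).1)
  obtain ⟨L, hL⟩ := exists_lipschitzOnWith_newtonField hW hU hK.cthickening hρW
  obtain ⟨η, hη, hηε, hηρ⟩ : ∃ η, 0 < η ∧ η ≤ ε ∧ η < ρ :=
    ⟨min ε ρ / 2, by positivity, by linarith [min_le_left ε ρ], by linarith [min_le_right ε ρ]⟩
  refine ⟨η * Real.exp (-(L * t₁)), by positivity, _, hK.cthickening, hρW,
    fun t ht y w hy hy0 hw0 => ?_⟩
  have hexp : η * Real.exp (-(L * t₁)) * Real.exp (L * (t - 0)) ≤ η := by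
    rw [mul_assoc, ← Real.exp_add]
    refine mul_le_of_le_one_right hη.le (Real.exp_le_one_iff.2 ?_)
    nlinarith [ht.2, L.2]
  have hclose := dist_le_of_lipschitzOnWith_closedBall (f := newtonField U)
    (X := fun s => (x s, v s)) (Y := fun s => (y s, w s)) (a := 0) (b := t)
    (δ := η * Real.exp (-(L * t₁)))
    (fun s hs => hL.mono ((closedBall_subset_cthickening_prod
      (mem_image_of_mem x (show s ∈ Icc 0 t₁ from ⟨hs.1, hs.2.le.trans ht.2⟩)) ρ).trans
        (prod_mono le_rfl (subset_univ _))))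
    (fun s hs => (hx.mono (Icc_subset_Icc_right ht.2)).hasDerivAt_newtonField hs)
    (fun s hs => hy.hasDerivAt_newtonField hs)
    (by rw [Prod.dist_eq, dist_eq_norm, dist_eq_norm]; exact max_le hy0.le hw0.le)
    (hexp.trans_lt hηρ) t ⟨ht.1, le_rfl⟩
  rw [Prod.dist_eq, max_le_iff, dist_eq_norm, dist_eq_norm] at hclose
  exact ⟨mem_cthickening_of_dist_le _ _ _ _ (mem_image_of_mem x ht)
    ((dist_eq_norm (y t) (x t)).trans_le ((hclose.1.trans hexp).trans hηρ.le)),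
    (hclose.1.trans hexp).trans hηε, (hclose.2.trans hexp).trans hηε⟩

theorem exists_extension_of_near_ray (hW : IsOpen W)
    (hWcone : ∀ x ∈ W, ∀ l : ℝ, 0 < l → l • x ∈ W) (hU : ContDiffOn ℝ 2 U W) {a : V} {ρ : ℝ}
    (haρ : closedBall a ρ ⊆ W) {A : Set V} (hA : IsCompact A) (hAW : A ⊆ W) {B t₁ T : ℝ}
    (ht₁ : 0 < t₁) (hT : 0 < T) (hsol : IsNewtonSolOn U W (Ico 0 T) y w)
    (hctrl : ∀ t ∈ Ico 0 T, (t ≤ t₁ → y t ∈ A ∧ ‖w t‖ ≤ B) ∧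
      (t₁ ≤ t → ‖y t - t • a‖ ≤ ρ * t ∧ ‖w t - a‖ ≤ ρ)) :
    ∃ (T' : ℝ) (z wz : ℝ → V), T < T' ∧ IsNewtonSolOn U W (Ico 0 T') z wz ∧
      z 0 = y 0 ∧ wz 0 = w 0 := by
  have hcone : IsCompact (Icc t₁ T • closedBall a ρ) :=
    isCompact_Icc.smul_set (isCompact_closedBall a ρ)
  have hconeW : Icc t₁ T • closedBall a ρ ⊆ W :=
    smul_subset_iff.2 fun l hl p hp => hWcone p (haρ hp) l (ht₁.trans_le hl.1)
  refine hsol.exists_extension hW hU (hA.union hcone) (union_subset hAW hconeW)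
    (B := max B (‖a‖ + ρ)) hT fun t ht => ?_
  rcases le_total t t₁ with htt₁ | htt₁
  · obtain ⟨hyA, hwB⟩ := (hctrl t ht).1 htt₁
    exact ⟨Or.inl hyA, le_max_of_le_left hwB⟩
  · obtain ⟨hy, hw⟩ := (hctrl t ht).2 htt₁
    have ht0 : 0 < t := ht₁.trans_le htt₁
    refine ⟨Or.inr ?_, le_max_of_le_right (by linarith [norm_le_insert' (w t) a])⟩
    rw [← smul_inv_smul₀ ht0.ne' (y t)]
    refine smul_mem_smul ⟨htt₁, ht.2.le⟩ (mem_closedBall.2 ?_)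
    rw [norm_sub_smul_eq_mul_dist ht0, mul_comm ρ] at hy
    exact le_of_mul_le_mul_left hy ht0

theorem exists_uniform_near_ray (hW : IsOpen W) (hU : ContDiffOn ℝ 2 U W) {a : V} {r M : ℝ}
    (hcone : ∀ p t, 0 < t → ‖p - t • a‖ ≤ r * t → ‖gradient U p‖ ≤ M / t ^ 2) (hM : 0 ≤ M)
    {η : ℝ} (hη : 0 < η) (hηr : η ≤ r) {x v : ℝ → V} (hsol : IsNewtonSolOn U W (Ici 0) x v)
    (hlim : Tendsto (fun t => t⁻¹ • x t) atTop (𝓝 a)) (hv : Tendsto v atTop (𝓝 a)) :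
    ∃ t₁ > 0, ∃ δ > 0, ∃ A, IsCompact A ∧ A ⊆ W ∧ ∃ B, ∀ (T : ℝ) (y w : ℝ → V),
      IsNewtonSolOn U W (Ico 0 T) y w → ‖y 0 - x 0‖ < δ → ‖w 0 - v 0‖ < δ →
      ∀ t ∈ Ico 0 T, (t ≤ t₁ → y t ∈ A ∧ ‖w t‖ ≤ B) ∧
        (t₁ ≤ t → ‖y t - t • a‖ ≤ η / 2 * t ∧ ‖w t - a‖ ≤ η / 2) := by
  obtain ⟨t₁, ⟨⟨hxt₁, hvt₁⟩, hMt₁⟩, ht₁⟩ :=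
    (((eventually_norm_sub_smul_le_of_tendsto_inv_smul hlim (by positivity : 0 < η / 8)).and
      (hv.eventually (closedBall_mem_nhds a (by positivity : 0 < η / 8)))).and
      ((tendsto_const_nhds.div_atTop tendsto_id : Tendsto (fun t : ℝ => M / t) atTop (𝓝 0))
        |>.eventually (ge_mem_nhds (by positivity : 0 < η / 4)))).and
      (eventually_ge_atTop 1) |>.exists
  rw [dist_eq_norm] at hvt₁
  obtain ⟨δ, hδ, A, hA, hAW, hnear⟩ :=
    (hsol.mono Icc_subset_Ici_self).exists_forall_near hW hU (by positivity : 0 < η / 16)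
  obtain ⟨Bv, hBv⟩ := isCompact_Icc.exists_bound_of_continuousOn
    (hsol.continuousOn_deriv.mono (Icc_subset_Ici_self : Icc 0 t₁ ⊆ Ici 0))
  refine ⟨t₁, by linarith, δ, hδ, A, hA, hAW, Bv + η / 16,
    fun T y w hy hy0 hw0 t ht => ⟨fun htt₁ => ?_, fun htt₁ => ?_⟩⟩
  · obtain ⟨hyA, -, hw⟩ := hnear t ⟨ht.1, htt₁⟩ y w
      (hy.mono (Icc_subset_Ico_right ht.2)) hy0 hw0
    exact ⟨hyA, by linarith [norm_le_insert' (w t) (v t), hBv t ⟨ht.1, htt₁⟩]⟩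
  · obtain ⟨-, hy₁, hw₁⟩ := hnear t₁ ⟨by linarith, le_rfl⟩ y w
      (hy.mono (Icc_subset_Ico_right (htt₁.trans_lt ht.2))) hy0 hw0
    refine (hy.mono fun u hu => ⟨by linarith [hu.1], hu.2.trans_lt ht.2⟩)
      |>.norm_sub_smul_le_of_near_ray hcone hM hη hηr (by linarith) hMt₁ ?_ ?_ t ⟨htt₁, le_rfl⟩
    · calc ‖y t₁ - t₁ • a‖ ≤ ‖y t₁ - x t₁‖ + ‖x t₁ - t₁ • a‖ :=
          norm_sub_le_norm_sub_add_norm_sub _ _ _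
        _ ≤ η / 4 * t₁ := by nlinarith
    · calc ‖w t₁ - a‖ ≤ ‖w t₁ - v t₁‖ + ‖v t₁ - a‖ := norm_sub_le_norm_sub_add_norm_sub _ _ _
        _ ≤ η / 4 := by linarith

end FiniteDimensional

end IsNewtonSolOn

end Newton

namespace NBodyHJ

theorem stmt18
    {V : Type*} [NormedAddCommGroup V] [InnerProductSpace ℝ V] [FiniteDimensional ℝ V]
    (W : Set V) (hW : IsOpen W) (hWcone : ∀ x ∈ W, ∀ l : ℝ, 0 < l → l • x ∈ W)
    (U : V → ℝ) (hU : ContDiffOn ℝ 2 U W)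
    (hhom : ∀ x ∈ W, ∀ l : ℝ, 0 < l → U (l • x) = l⁻¹ * U x)
    (x v : ℝ → V)
    (hsol : ∀ t ∈ Set.Ici (0:ℝ), x t ∈ W ∧
      HasDerivAt x (v t) t ∧ HasDerivAt v (gradient U (x t)) t)
    (a : V) (haW : a ∈ W)
    (hlim : Tendsto (fun t : ℝ => t⁻¹ • x t) atTop (nhds a)) :
    Tendsto v atTop (nhds a) ∧
    ∀ ε : ℝ, 0 < ε → ∃ t₁ > (0:ℝ), ∃ δ > (0:ℝ),
      (∀ (T : ℝ), 0 < T → ∀ y w : ℝ → V,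
        (∀ t ∈ Set.Ico (0:ℝ) T, y t ∈ W ∧
          HasDerivAt y (w t) t ∧ HasDerivAt w (gradient U (y t)) t) →
        ‖y 0 - x 0‖ < δ → ‖w 0 - v 0‖ < δ →
        ∃ (T' : ℝ) (z wz : ℝ → V), T < T' ∧
          (∀ t ∈ Set.Ico (0:ℝ) T', z t ∈ W ∧
            HasDerivAt z (wz t) t ∧ HasDerivAt wz (gradient U (z t)) t) ∧
          z 0 = y 0 ∧ wz 0 = w 0) ∧
      (∀ y w : ℝ → V,
        (∀ t ∈ Set.Ici (0:ℝ), y t ∈ W ∧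
          HasDerivAt y (w t) t ∧ HasDerivAt w (gradient U (y t)) t) →
        ‖y 0 - x 0‖ < δ → ‖w 0 - v 0‖ < δ →
        (∀ t : ℝ, t₁ < t → ‖y t - t • a‖ < t * ε) ∧
        ∃ b ∈ W, ‖b - a‖ < ε ∧ Tendsto (fun t : ℝ => t⁻¹ • y t) atTop (nhds b)) := by
  obtain ⟨r, hr, har⟩ := nhds_basis_closedBall.mem_iff.1 (hW.mem_nhds haW)
  obtain ⟨M, hM, hcone⟩ :=
    exists_norm_gradient_le_of_closedBall_subset hW hWcone (hU.of_le one_le_two) hhom har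
  have hv : Tendsto v atTop (𝓝 a) :=
    IsNewtonSolOn.tendsto_deriv_of_tendsto_inv_smul hcone hr hsol hlim
  refine ⟨hv, fun ε hε => ?_⟩
  obtain ⟨η, hη, hηε, hηr⟩ : ∃ η, 0 < η ∧ η ≤ ε ∧ η ≤ r :=
    ⟨min ε r, lt_min hε hr, min_le_left ε r, min_le_right ε r⟩
  obtain ⟨t₁, ht₁, δ, hδ, A, hA, hAW, B, hctrl⟩ :=
    IsNewtonSolOn.exists_uniform_near_ray hW hU hcone hM hη hηr hsol hlim hv
  have hηW : closedBall a (η / 2) ⊆ W := (closedBall_subset_closedBall (by linarith)).trans har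
  refine ⟨t₁, ht₁, δ, hδ, fun T hT y w hy hy0 hw0 => ?_, fun y w hy hy0 hw0 => ?_⟩
  · exact IsNewtonSolOn.exists_extension_of_near_ray hW hWcone hU hηW hA hAW ht₁ hT hy
      (hctrl T y w hy hy0 hw0)
  have hfar : ∀ t ∈ Ici t₁, ‖y t - t • a‖ ≤ η / 2 * t ∧ ‖w t - a‖ ≤ η / 2 := fun t ht =>
    (hctrl (t + 1) y w (IsNewtonSolOn.mono hy Ico_subset_Ici_self) hy0 hw0 t
      ⟨ht₁.le.trans ht, by linarith⟩).2 ht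
  obtain ⟨b, hwb, hyb⟩ := (IsNewtonSolOn.mono hy (Ici_subset_Ici.2 ht₁.le))
    |>.exists_tendsto_of_norm_sub_smul_le hcone ht₁ fun t ht => (hfar t ht).1.trans
      (mul_le_mul_of_nonneg_right (by linarith) (ht₁.trans_le ht).le)
  have hba : ‖b - a‖ ≤ η / 2 :=
    le_of_tendsto (hwb.sub_const a).norm ((eventually_ge_atTop t₁).mono fun t ht => (hfar t ht).2)
  refine ⟨fun t ht => ?_, b, hηW (by rwa [mem_closedBall, dist_eq_norm]), by linarith, hyb⟩
  calc ‖y t - t • a‖ ≤ η / 2 * t := (hfar t ht.le).1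
    _ < t * ε := by nlinarith [ht₁.trans ht]

end NBodyHJ
end
end
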